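/- For all s, t ∈ ℂ, the tenth transvectant of the square of f_{s,t} := z1^5 + s·z1^4·z2 + t·z1^3·z2^2 + z2^5 with itself satisfies (f_{s,t}^2, f_{s,t}^2)^{(10)} = 57600·10!·(125 − 3st^2). -/
import Mathlib

set_option maxHeartbeats 1000000

open MvPolynomial Finset

/-- The binary quintic `f_{s,t} = z1^5 + s z1^4 z2 + t z1^3 z2^2 + z2^5`. -/
noncomputable def fst (s t : ℂ) : MvPolynomial (Fin 2) ℂ :=
  (X 0) ^ 5 + MvPolynomial.C s * (X 0) ^ 4 * X 1
    + MvPolynomial.C t * (X 0) ^ 3 * (X 1) ^ 2 + (X 1) ^ 5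

noncomputable def M (a b : ℕ) (c : ℂ) : MvPolynomial (Fin 2) ℂ :=
  monomial (Finsupp.single 0 a + Finsupp.single 1 b) c

lemma M_eq (a b : ℕ) (c : ℂ) : M a b c = C c * X 0 ^ a * X 1 ^ b := by
  simp [M, X_pow_eq_monomial, C_mul_monomial, monomial_mul]

lemma fst_sq (s t : ℂ) : fst s t ^ 2 =
    M 10 0 1 + M 9 1 (2*s) + M 8 2 (s^2 + 2*t) + M 7 3 (2*s*t) + M 6 4 (t^2)
      + M 5 5 2 + M 4 6 (2*s) + M 3 7 (2*t) + M 0 10 1 := by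
  simp only [M_eq, fst, map_add, map_mul, map_ofNat, map_one, map_pow]
  ring

lemma coeff_fst_sq (s t : ℂ) (i : ℕ) :
    MvPolynomial.coeff (Finsupp.single 0 i + Finsupp.single 1 (10 - i)) (fst s t ^ 2) =
      if i = 10 then 1 else if i = 9 then 2*s else if i = 8 then s^2+2*t else
      if i = 7 then 2*s*t else if i = 6 then t^2 else if i = 5 then 2 else
      if i = 4 then 2*s else if i = 3 then 2*t else if i = 0 then 1 else 0 := by
  rw [fst_sq]
  rcases Nat.lt_or_ge i 11 with h | h
  · interval_cases i <;>
      · simp only [M, coeff_add, coeff_monomial, Finsupp.ext_iff, Fin.forall_fin_two,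
          Finsupp.add_apply, Finsupp.single_apply]
        norm_num
  · have h10 : i ≠ 10 := by omega
    have : 10 - i = 0 := by omega
    rw [this]
    simp only [M, coeff_add, coeff_monomial, Finsupp.ext_iff, Fin.forall_fin_two,
      Finsupp.add_apply, Finsupp.single_apply]
    norm_num
    split_ifs <;> first | rfl | omega

/-- Writing `f_{s,t}^2 = Σ_{i=0}^{10} binom(10,i) a_i z1^i z2^{10−i}`, the tenth
transvectant `(f_{s,t}^2, f_{s,t}^2)^{(10)} = (10!)^2 Σ_i (−1)^i binom(10,i) a_i a_{10−i}` equals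
`57600 · 10! · (125 − 3 s t^2)`. -/
theorem transvectant_fst_sq (s t : ℂ) (a : ℕ → ℂ)
    (ha : ∀ i ≤ 10, a i = ((Nat.choose 10 i : ℂ))⁻¹ *
      MvPolynomial.coeff (Finsupp.single 0 i + Finsupp.single 1 (10 - i)) ((fst s t) ^ 2)) :
    ((Nat.factorial 10 : ℂ)) ^ 2 *
      ∑ i ∈ Finset.range 11, (-1 : ℂ) ^ i * (Nat.choose 10 i : ℂ) * a i * a (10 - i)
      = 57600 * (Nat.factorial 10 : ℂ) * (125 - 3 * s * t ^ 2) := by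
  have hv : ∀ i ≤ 10, a i = ((Nat.choose 10 i : ℂ))⁻¹ *
      (if i = 10 then 1 else if i = 9 then 2*s else if i = 8 then s^2+2*t else
      if i = 7 then 2*s*t else if i = 6 then t^2 else if i = 5 then 2 else
      if i = 4 then 2*s else if i = 3 then 2*t else if i = 0 then 1 else 0) := by
    intro i hi; rw [ha i hi, coeff_fst_sq]
  have h0 := hv 0 (by norm_num); have h1 := hv 1 (by norm_num)
  have h2 := hv 2 (by norm_num); have h3 := hv 3 (by norm_num)
  have h4 := hv 4 (by norm_num); have h5 := hv 5 (by norm_num)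
  have h6 := hv 6 (by norm_num); have h7 := hv 7 (by norm_num)
  have h8 := hv 8 (by norm_num); have h9 := hv 9 (by norm_num)
  have h10 := hv 10 (by norm_num)
  norm_num [Nat.choose] at h0 h1 h2 h3 h4 h5 h6 h7 h8 h9 h10
  simp only [Finset.sum_range_succ, Finset.sum_range_zero]
  norm_num [h0, h1, h2, h3, h4, h5, h6, h7, h8, h9, h10, Nat.factorial, Nat.choose]
  ring
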